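/- arXiv:2408.14980 — 2 statements merged into one kernel-verified Lean document; each statement's English description precedes it below -/
import Mathlib

section
/- In the FMD game, the privacy breach probability of player u, namely 1-(1-α_u)^{in_u} with α_u = ∏_{v≠u}(1-p_v), is nonincreasing in each other player's rate p_v (v ≠ u): increasing any p_v weakly decreases u's breach probability, and strictly decreases it if all other rates p_w (w ≠ u, w ≠ v) are strictly less than 1 and in_u ≥ 1. -/
open Finset

/-- The breach coefficient `α_u = ∏_{v ≠ u} (1 - p_v)`. -/
noncomputable def alpha {U : ℕ} (p : Fin U → ℝ) (u : Fin U) : ℝ :=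
  ∏ v ∈ Finset.univ.erase u, (1 - p v)

/-- the breach probability `1 - (1 - α_u)^{in_u}` of player `u` is
nonincreasing in each other player's rate `p_v` (`v ≠ u`): raising `p_v` to `q ≥ p_v`
weakly decreases it, and strictly decreases it when `q > p_v`, `in_u ≥ 1` and all other
rates `p_w` (`w ≠ u, w ≠ v`) are strictly below `1`. -/
theorem fmd_breach_nonincreasing_in_others_rate
    {U : ℕ} (p : Fin U → ℝ) (hp : ∀ w, p w ∈ Set.Icc (0 : ℝ) 1)
    (u v : Fin U) (hvu : v ≠ u) (inu : ℕ)
    (q : ℝ) (hq : q ∈ Set.Icc (0 : ℝ) 1) :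
    (p v ≤ q →
      1 - (1 - alpha (Function.update p v q) u) ^ inu ≤ 1 - (1 - alpha p u) ^ inu) ∧
    (p v < q → 1 ≤ inu → (∀ w, w ≠ u → w ≠ v → p w < 1) →
      1 - (1 - alpha (Function.update p v q) u) ^ inu < 1 - (1 - alpha p u) ^ inu) := by
  classical
  set s := (Finset.univ.erase u).erase v with hs
  have hv : v ∈ Finset.univ.erase u := Finset.mem_erase.mpr ⟨hvu, Finset.mem_univ v⟩
  set P : ℝ := ∏ w ∈ s, (1 - p w) with hPdef
  have hprod : ∀ r : ℝ, alpha (Function.update p v r) u = (1 - r) * P := by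
    intro r
    rw [alpha, ← Finset.mul_prod_erase _ _ hv]
    congr 1
    · simp
    · apply Finset.prod_congr rfl
      intro w hw
      have hwv : w ≠ v := (Finset.mem_erase.mp hw).1
      simp [Function.update_of_ne hwv]
  have halpha : alpha p u = (1 - p v) * P := by
    have := hprod (p v)
    simpa [Function.update_eq_self] using this
  have hP0 : 0 ≤ P :=
    Finset.prod_nonneg (fun w _ => by linarith [(hp w).2])
  have hP1 : P ≤ 1 :=
    Finset.prod_le_one (fun w _ => by linarith [(hp w).2]) (fun w _ => by linarith [(hp w).1])
  have ha1 : alpha p u ≤ 1 := by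
    rw [halpha]
    have h1 : 1 - p v ≤ 1 := by linarith [(hp v).1]
    have h0 : 0 ≤ 1 - p v := by linarith [(hp v).2]
    calc (1 - p v) * P ≤ 1 * P := mul_le_mul_of_nonneg_right h1 hP0
      _ ≤ 1 := by simpa using hP1
  constructor
  · intro hle
    have hq0 : 0 ≤ alpha (Function.update p v q) u := by
      rw [hprod]
      exact mul_nonneg (by linarith [hq.2]) hP0
    have hmono : alpha (Function.update p v q) u ≤ alpha p u := by
      rw [hprod, halpha]
      exact mul_le_mul_of_nonneg_right (by linarith) hP0
    have := pow_le_pow_left₀ (by linarith : (0:ℝ) ≤ 1 - alpha p u)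
      (by linarith : 1 - alpha p u ≤ 1 - alpha (Function.update p v q) u) inu
    linarith
  · intro hlt hin hall
    have hPpos : 0 < P := by
      apply Finset.prod_pos
      intro w hw
      have hwv : w ≠ v := (Finset.mem_erase.mp hw).1
      have hwu : w ≠ u := (Finset.mem_erase.mp (Finset.mem_erase.mp hw).2).1
      linarith [hall w hwu hwv]
    have hmono : alpha (Function.update p v q) u < alpha p u := by
      rw [hprod, halpha]
      exact mul_lt_mul_of_pos_right (by linarith) hPpos
    have := pow_lt_pow_left₀
      (by linarith : 1 - alpha p u < 1 - alpha (Function.update p v q) u)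
      (by linarith : (0:ℝ) ≤ 1 - alpha p u) (by omega : inu ≠ 0)
    linarith
end

section
/- In the star L-FMD game of the previous setting with threshold condition a_u·k·L > f·(M-in_u), the profile where the center plays p_u = 1/2 and all leaves play 0 is a Nash equilibrium of the L-FMD game, provided each leaf is selfish (a_v = 0). This equilibrium is nontrivial (nonzero aggregate cover traffic), in contrast to the selfish FMD game whose only equilibrium is all-zero. -/
open Finset

/-- The L-FMD utility with neighborhoods given by `nbr`:
`φ_u = -L·(1-(1-α_u)^{in_u}) - f·(in_u + p_u·(M-in_u)) - a_u·∑_{v ∈ nbr u} L·(1-(1-α_v)^{in_v})`. -/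
noncomputable def phiLoc {U : ℕ} (L f M : ℝ) (a : Fin U → ℝ) (inDeg : Fin U → ℕ)
    (nbr : Fin U → Finset (Fin U)) (p : Fin U → ℝ) (u : Fin U) : ℝ :=
  -(L * (1 - (1 - alpha p u) ^ inDeg u))
    - f * ((inDeg u : ℝ) + p u * (M - (inDeg u : ℝ)))
    - a u * ∑ v ∈ nbr u, L * (1 - (1 - alpha p v) ^ inDeg v)

/-- The finite FMD strategy set `Σ = {0} ∪ {2^{-k} : 1 ≤ k ≤ 10}`. -/
def stratSet : Set ℝ :=
  {0} ∪ {x | ∃ k : ℕ, 1 ≤ k ∧ k ≤ 10 ∧ x = (2 : ℝ) ^ (-(k : ℤ))}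

/-- Every strategy in the strategy set lies in `[0, 1/2]`. -/
lemma stratSet_bounds {q : ℝ} (hq : q ∈ stratSet) : 0 ≤ q ∧ q ≤ 1 / 2 := by
  rcases hq with h | ⟨j, hj1, _, rfl⟩
  · rcases h with rfl; norm_num
  · constructor
    · positivity
    · have : (2 : ℝ) ^ (-(j : ℤ)) ≤ (2 : ℝ) ^ (-(1 : ℤ)) :=
        zpow_le_zpow_right₀ (by norm_num) (by omega)
      simpa using this

lemma alpha_center {n : ℕ} (p : Fin (n + 1) → ℝ) (h : ∀ w, w ≠ 0 → p w = 0) :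
    alpha p 0 = 1 := by
  unfold alpha
  apply Finset.prod_eq_one
  intro w hw
  rw [h w (Finset.ne_of_mem_erase hw)]; ring

lemma alpha_leaf {n : ℕ} (p : Fin (n + 1) → ℝ) (v : Fin (n + 1)) (hv : v ≠ 0)
    (h : ∀ w, w ≠ 0 → w ≠ v → p w = 0) : alpha p v = 1 - p 0 := by
  unfold alpha
  rw [Finset.prod_eq_single 0]
  · intro b hb hb0
    rw [h b hb0 (Finset.ne_of_mem_erase hb)]; ring
  · intro h0
    exact absurd (Finset.mem_erase.mpr ⟨Ne.symm hv, Finset.mem_univ _⟩) h0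

/-- Center utility when all leaves play 0. -/
lemma phi_center_eval {k : ℕ} (L f M a0 : ℝ) (inu : ℕ) (hinu : 1 ≤ inu)
    (p : Fin (k + 1) → ℝ) (h : ∀ w, w ≠ 0 → p w = 0) :
    phiLoc L f M (fun w => if w = 0 then a0 else 0) (fun w => if w = 0 then inu else 1)
      (fun w => if w = 0 then Finset.univ.erase 0 else {0}) p 0
    = -L - f * ((inu : ℝ) + p 0 * (M - (inu : ℝ))) - a0 * (k * (L * (1 - p 0))) := by
  have h0 : alpha p 0 = 1 := alpha_center p h
  have hterm : ∀ v ∈ Finset.univ.erase (0 : Fin (k + 1)),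
      L * (1 - (1 - alpha p v) ^ (if v = 0 then inu else 1)) = L * (1 - p 0) := by
    intro v hv
    have hv0 : v ≠ 0 := Finset.ne_of_mem_erase hv
    have : alpha p v = 1 - p 0 := alpha_leaf p v hv0 (fun w hw hwv => h w hw)
    rw [if_neg hv0, this]
    ring
  have hsum : ∑ v ∈ Finset.univ.erase (0 : Fin (k + 1)),
      L * (1 - (1 - alpha p v) ^ (if v = 0 then inu else 1)) = k * (L * (1 - p 0)) := by
    rw [Finset.sum_congr rfl hterm, Finset.sum_const,
      Finset.card_erase_of_mem (Finset.mem_univ _)]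
    simp [Fintype.card_fin]
  simp only [phiLoc, if_true]
  rw [h0, hsum]
  have : (1 : ℝ) - 1 = 0 := by ring
  rw [this, zero_pow (by omega : inu ≠ 0)]
  ring

/-- Leaf utility when all other leaves play 0 and the center plays 1/2. -/
lemma phi_leaf_eval {k : ℕ} (L f M a0 : ℝ) (inu : ℕ)
    (p : Fin (k + 1) → ℝ) (u : Fin (k + 1)) (hu : u ≠ 0) (h0 : p 0 = 1 / 2)
    (h : ∀ w, w ≠ 0 → w ≠ u → p w = 0) :
    phiLoc L f M (fun w => if w = 0 then a0 else 0) (fun w => if w = 0 then inu else 1)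
      (fun w => if w = 0 then Finset.univ.erase 0 else {0}) p u
    = -(L * (1 / 2)) - f * (1 + p u * (M - 1)) := by
  have hau : alpha p u = 1 - p 0 := alpha_leaf p u hu h
  simp only [phiLoc]
  rw [if_neg hu, if_neg hu, if_neg hu, hau, h0]
  push_cast
  ring

/-- in the star L-FMD game (altruistic center `0` with constant `a₀ > 0`
and `k` selfish leaves with unit in-degree), under the threshold condition
`a₀·k·L > f·(M - in_u)`, the profile "center plays `1/2`, leaves play `0`" is a Nash
equilibrium, and it is nontrivial (nonzero aggregate cover traffic). -/
theorem lfmd_star_nontrivial_nash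
    (k : ℕ) (hk : 0 < k) (L f M a0 : ℝ) (inu : ℕ)
    (hL : 0 < L) (hf : 0 < f) (ha : 0 < a0) (hinu : 1 ≤ inu)
    (hMu : (inu : ℝ) < M) (hM1 : (1 : ℝ) < M)
    (hthr : a0 * k * L > f * (M - (inu : ℝ))) :
    let a : Fin (k + 1) → ℝ := fun w => if w = 0 then a0 else 0
    let inDeg : Fin (k + 1) → ℕ := fun w => if w = 0 then inu else 1
    let nbr : Fin (k + 1) → Finset (Fin (k + 1)) :=
      fun w => if w = 0 then Finset.univ.erase 0 else {0}
    let pstar : Fin (k + 1) → ℝ := fun w => if w = 0 then 1 / 2 else 0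
    (∀ u : Fin (k + 1), ∀ q ∈ stratSet,
        phiLoc L f M a inDeg nbr (Function.update pstar u q) u ≤
          phiLoc L f M a inDeg nbr pstar u) ∧
    0 < ∑ w : Fin (k + 1), pstar w := by
  intro a inDeg nbr pstar
  have hps : ∀ w : Fin (k + 1), w ≠ 0 → pstar w = 0 := by
    intro w hw; simp only [pstar, if_neg hw]
  have hps0 : pstar 0 = 1 / 2 := by simp [pstar]
  constructor
  · intro u q hq
    obtain ⟨hq0, hq2⟩ := stratSet_bounds hq
    by_cases hu : u = 0
    · subst hu
      have hupd : ∀ w : Fin (k + 1), w ≠ 0 → Function.update pstar 0 q w = 0 := by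
        intro w hw
        rw [Function.update_of_ne hw]
        exact hps w hw
      have h1 := phi_center_eval (k := k) L f M a0 inu hinu (Function.update pstar 0 q) hupd
      have h2 := phi_center_eval (k := k) L f M a0 inu hinu pstar hps
      rw [show phiLoc L f M a inDeg nbr (Function.update pstar 0 q) 0 =
        phiLoc L f M (fun w => if w = 0 then a0 else 0) (fun w => if w = 0 then inu else 1)
          (fun w => if w = 0 then Finset.univ.erase 0 else {0})
          (Function.update pstar 0 q) 0 from rfl, h1]
      rw [show phiLoc L f M a inDeg nbr pstar 0 =
        phiLoc L f M (fun w => if w = 0 then a0 else 0) (fun w => if w = 0 then inu else 1)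
          (fun w => if w = 0 then Finset.univ.erase 0 else {0}) pstar 0 from rfl, h2]
      rw [Function.update_self, hps0]
      have hk1 : (1 : ℝ) ≤ (k : ℝ) := by exact_mod_cast hk
      nlinarith [mul_nonneg (by linarith : (0:ℝ) ≤ 1 / 2 - q)
        (by linarith : (0:ℝ) ≤ a0 * k * L - f * (M - (inu : ℝ)))]
    · have h0u : (0 : Fin (k + 1)) ≠ u := Ne.symm hu
      have hupd0 : Function.update pstar u q 0 = 1 / 2 := by
        rw [Function.update_of_ne h0u]; exact hps0
      have hupd : ∀ w : Fin (k + 1), w ≠ 0 → w ≠ u → Function.update pstar u q w = 0 := by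
        intro w hw hwu
        rw [Function.update_of_ne hwu]
        exact hps w hw
      have h1 := phi_leaf_eval (k := k) L f M a0 inu (Function.update pstar u q) u hu hupd0 hupd
      have h2 := phi_leaf_eval (k := k) L f M a0 inu pstar u hu hps0
        (fun w hw _ => hps w hw)
      rw [show phiLoc L f M a inDeg nbr (Function.update pstar u q) u =
        phiLoc L f M (fun w => if w = 0 then a0 else 0) (fun w => if w = 0 then inu else 1)
          (fun w => if w = 0 then Finset.univ.erase 0 else {0})
          (Function.update pstar u q) u from rfl, h1]
      rw [show phiLoc L f M a inDeg nbr pstar u =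
        phiLoc L f M (fun w => if w = 0 then a0 else 0) (fun w => if w = 0 then inu else 1)
          (fun w => if w = 0 then Finset.univ.erase 0 else {0}) pstar u from rfl, h2]
      rw [Function.update_self, hps u hu]
      nlinarith [mul_nonneg hf.le (mul_nonneg hq0 (by linarith : (0:ℝ) ≤ M - 1))]
  · have : ∑ w : Fin (k + 1), pstar w = 1 / 2 := by
      simp only [pstar]
      rw [Finset.sum_ite_eq' Finset.univ (0 : Fin (k + 1)) (fun _ => (1 : ℝ) / 2)]
      simp
    rw [this]; norm_num
end
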